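/- arXiv:2405.03407 — 2 statements merged into one kernel-verified Lean document; each statement's English description precedes it below -/
import Mathlib

section
/- Let κ = (κ₁,…,κₙ) ∈ Γ_k with κ₁ ≥ κ₂ ≥ ⋯ ≥ κₙ. Then σ_k(κ) ≤ C(n,k)·κ₁κ₂⋯κ_k, where C(n,k) is the binomial coefficient 'n choose k'. -/
noncomputable def esymm (n k : ℕ) (κ : Fin n → ℝ) : ℝ :=
  ∑ s ∈ Finset.powersetCard k (Finset.univ : Finset (Fin n)), ∏ i ∈ s, κ i

noncomputable def esymm1 (n m : ℕ) (κ : Fin n → ℝ) (i : Fin n) : ℝ :=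
  ∑ s ∈ Finset.powersetCard m ((Finset.univ : Finset (Fin n)).erase i), ∏ j ∈ s, κ j

noncomputable def esymm2 (n m : ℕ) (κ : Fin n → ℝ) (i j : Fin n) : ℝ :=
  ∑ s ∈ Finset.powersetCard m (((Finset.univ : Finset (Fin n)).erase i).erase j), ∏ l ∈ s, κ l

def GardingCone (n k : ℕ) : Set (Fin n → ℝ) :=
  {κ | ∀ m, 1 ≤ m → m ≤ k → 0 < esymm n m κ}

/-!
Peel off the largest entry `κ₁` and write `κ'` for the rest:
`σ_k(κ) = κ₁ σ_{k-1}(κ') + σ_k(κ')`. The key fact is that `κ' ∈ Γ_{k-1}`. Granting it, induction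
on `n` bounds the first term by `C(n-1, k-1) κ₁⋯κ_k`, and the second, if positive (so that
`κ' ∈ Γ_k`), by `C(n-1, k) κ₂⋯κ_{k+1} ≤ C(n-1, k) κ₁⋯κ_k`; Pascal's rule adds these up.

For the key fact, move `κ` along the segment from `(1, …, 1)`, which stays inside `Γ_k`. Suppose
that `σ_m(κ')`, `m < k`, vanished somewhere on it, where `σ_{m-1}(κ') > 0` by induction on `m`.
Rolle's theorem makes the derivatives of `∏ (t + κ'_i)` real-rooted, which yields
`σ_{m-1}(κ') σ_{m+1}(κ') ≤ 0`, hence `σ_{m+1}(κ) = σ_{m+1}(κ') ≤ 0`: a contradiction. So `σ_m(κ')`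
keeps the positive sign it has at `(1, …, 1)`.
-/

open Polynomial

namespace Multiset

section CommSemiring

variable {R : Type*} [CommSemiring R]

theorem esymm_zero (s : Multiset R) : s.esymm 0 = 1 := by
  simp [esymm]

theorem esymm_one (s : Multiset R) : s.esymm 1 = s.sum := by
  simp [esymm, powersetCard_one]

theorem esymm_eq_zero_of_card_lt {s : Multiset R} {m : ℕ} (h : card s < m) : s.esymm m = 0 := by
  simp [esymm, powersetCard_eq_empty _ h]

theorem esymm_cons_succ (a : R) (s : Multiset R) (m : ℕ) :
    (a ::ₘ s).esymm (m + 1) = a * s.esymm m + s.esymm (m + 1) := by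
  simp [esymm, sum_map_mul_left, add_comm]

theorem esymm_replicate (n m : ℕ) (a : R) : (replicate n a).esymm m = n.choose m * a ^ m := by
  induction n generalizing m with
  | zero =>
    cases m with
    | zero => simp [esymm_zero]
    | succ m => simpa using esymm_eq_zero_of_card_lt (s := (0 : Multiset R)) m.succ_pos
  | succ n ih =>
    cases m with
    | zero => simp [esymm_zero]
    | succ m =>
      rw [replicate_succ, esymm_cons_succ, ih, ih, Nat.choose_succ_succ']
      push_cast
      ring

theorem esymm_map_mul (c : R) (s : Multiset R) (m : ℕ) :
    (s.map (c * ·)).esymm m = c ^ m * s.esymm m := by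
  simpa using (pow_smul_esymm c m s).symm

theorem continuous_esymm_map [TopologicalSpace R] [IsTopologicalSemiring R] {α : Type*}
    [TopologicalSpace α] {f : α → R → R} (hf : ∀ x, Continuous fun c => f c x)
    (s : Multiset R) (m : ℕ) : Continuous fun c => (s.map (f c)).esymm m := by
  simp only [esymm, powersetCard_map, map_map, Function.comp_def]
  exact continuous_multiset_sum _ fun t _ => continuous_multiset_prod _ fun x _ => hf x

theorem splits_prod_X_add_C (s : Multiset R) : (s.map (X + C ·)).prod.Splits :=
  Splits.multisetProd fun _ hf => by
    obtain ⟨a, -, rfl⟩ := mem_map.1 hf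
    exact Splits.X_add_C a

theorem natDegree_prod_X_add_C [Nontrivial R] (s : Multiset R) :
    (s.map (X + C ·)).prod.natDegree = card s := by
  rw [natDegree_multiset_prod_of_monic _ fun _ hf => by
    obtain ⟨a, -, rfl⟩ := mem_map.1 hf
    exact monic_X_add_C a]
  simp

theorem taylor_prod_X_add_C (s : Multiset R) (t : R) :
    taylor t (s.map (X + C ·)).prod = ((s.map (· + t)).map (X + C ·)).prod := by
  change taylorAlgHom t _ = _
  rw [map_multiset_prod, map_map, map_map]
  refine congr_arg _ (map_congr rfl fun a _ => ?_)
  simp only [Function.comp_apply, taylorAlgHom_apply, _root_.map_add, taylor_X, taylor_C]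
  ring

end CommSemiring

theorem prod_X_sub_C_two_mul_coeff_zero_mul_coeff_two_le (s : Multiset ℝ) :
    2 * (s.map (X - C ·)).prod.coeff 0 * (s.map (X - C ·)).prod.coeff 2
      ≤ (s.map (X - C ·)).prod.coeff 1 ^ 2 := by
  induction s using Multiset.induction_on with
  | empty => simp [coeff_one]
  | cons a s ih =>
    set q := (s.map (X - C ·)).prod
    simp only [map_cons, prod_cons]
    rw [mul_coeff_zero, coeff_X_sub_C_mul, coeff_X_sub_C_mul]
    simp only [coeff_sub, coeff_X_zero, coeff_C_zero]
    nlinarith [sq_nonneg (q.coeff 0), mul_nonneg (sq_nonneg a) (sub_nonneg.2 ih)]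

end Multiset

namespace Polynomial

-- `p(0) p''(0) ≤ p'(0)²`: a real-rooted polynomial is log-concave.
theorem Splits.two_mul_coeff_zero_mul_coeff_two_le {p : ℝ[X]} (hp : p.Splits) :
    2 * p.coeff 0 * p.coeff 2 ≤ p.coeff 1 ^ 2 := by
  rw [hp.eq_prod_roots]
  simp only [coeff_C_mul]
  nlinarith [mul_nonneg (sq_nonneg p.leadingCoeff)
    (sub_nonneg.2 (Multiset.prod_X_sub_C_two_mul_coeff_zero_mul_coeff_two_le p.roots))]

theorem Splits.derivative {p : ℝ[X]} (hp : p.Splits) : (Polynomial.derivative p).Splits := by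
  rw [splits_iff_card_roots] at hp ⊢
  have h₁ := card_roots_le_derivative p
  have h₂ := card_roots' (Polynomial.derivative p)
  have h₃ := natDegree_derivative_le p
  by_cases h₀ : p.natDegree = 0
  · rw [eq_C_of_natDegree_eq_zero h₀, derivative_C]
    simp
  · omega

theorem Splits.iterate_derivative {p : ℝ[X]} (hp : p.Splits) (n : ℕ) :
    (Polynomial.derivative^[n] p).Splits := by
  induction n with
  | zero => exact hp
  | succ n ih => rw [Function.iterate_succ_apply']; exact ih.derivative

end Polynomial

namespace Multiset

-- The three lowest coefficients of the `(card s - m - 2)`-th derivative of `∏ (X + a)` are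
-- positive multiples of `esymm (m + 2)`, `esymm (m + 1)` and `esymm m`.
theorem esymm_mul_esymm_nonpos_of_esymm_eq_zero {s : Multiset ℝ} {m : ℕ}
    (h : s.esymm (m + 1) = 0) : s.esymm m * s.esymm (m + 2) ≤ 0 := by
  rcases lt_or_ge (card s) (m + 2) with hs | hs
  · rw [esymm_eq_zero_of_card_lt hs, mul_zero]
  set a := card s - (m + 2)
  have hcoeff : ∀ j ≤ 2, (derivative^[a] (s.map (X + C ·)).prod).coeff j
      = (j + a).descFactorial a * s.esymm (m + 2 - j) := by
    intro j hj
    rw [coeff_iterate_derivative, prod_X_add_C_coeff s (by omega), nsmul_eq_mul,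
      show card s - (j + a) = m + 2 - j by omega]
  have hpos : ∀ j, (0 : ℝ) < (j + a).descFactorial a := fun j => by
    exact_mod_cast Nat.descFactorial_pos.2 (by omega)
  have key := ((splits_prod_X_add_C s).iterate_derivative a).two_mul_coeff_zero_mul_coeff_two_le
  rw [hcoeff 0 (by omega), hcoeff 1 (by omega), hcoeff 2 (by omega)] at key
  simp only [Nat.sub_zero, show m + 2 - 1 = m + 1 by omega, show m + 2 - 2 = m by omega, h] at key
  have := mul_pos (hpos 0) (hpos 2)
  nlinarith

def InGardingCone (s : Multiset ℝ) (k : ℕ) : Prop :=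
  ∀ m, 1 ≤ m → m ≤ k → 0 < s.esymm m

theorem inGardingCone_succ {s : Multiset ℝ} {k : ℕ} :
    s.InGardingCone (k + 1) ↔ s.InGardingCone k ∧ 0 < s.esymm (k + 1) := by
  refine ⟨fun h => ⟨fun m hm hmk => h m hm (by omega), h _ (by omega) le_rfl⟩, ?_⟩
  rintro ⟨h, hk⟩ m hm hmk
  rcases Nat.lt_or_eq_of_le hmk with hmk | rfl
  exacts [h m hm (by omega), hk]

namespace InGardingCone

variable {s : Multiset ℝ} {k : ℕ}

theorem mono (h : s.InGardingCone k) {l : ℕ} (hl : l ≤ k) : s.InGardingCone l :=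
  fun m hm hml => h m hm (hml.trans hl)

theorem esymm_pos (h : s.InGardingCone k) {m : ℕ} (hm : m ≤ k) : 0 < s.esymm m := by
  rcases m.eq_zero_or_pos with rfl | hm₀
  · rw [esymm_zero]; exact zero_lt_one
  · exact h m hm₀ hm

theorem le_card (h : s.InGardingCone k) (hk : 1 ≤ k) : k ≤ card s := by
  by_contra! hs
  exact (h k hk le_rfl).ne' (esymm_eq_zero_of_card_lt hs)

theorem pos_of_forall_le {a : ℝ} (h : (a ::ₘ s).InGardingCone (k + 1))
    (ha : ∀ b ∈ s, b ≤ a) : 0 < a := by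
  have hsum := h 1 le_rfl (by omega)
  rw [esymm_one, sum_cons] at hsum
  by_contra! ha₀
  linarith [sum_le_card_nsmul s a ha, nsmul_nonpos ha₀ (card s)]

theorem map_mul (h : s.InGardingCone k) {c : ℝ} (hc : 0 < c) : (s.map (c * ·)).InGardingCone k :=
  fun m hm hmk => by rw [esymm_map_mul]; exact mul_pos (pow_pos hc m) (h m hm hmk)

-- Shifting every root of `∏ (X + a)` by `t` is a Taylor shift, whose coefficients are
-- nonnegative combinations of the `esymm`s of lower degree.
theorem esymm_le_esymm_map_add (h : s.InGardingCone k) {m : ℕ} (hm : m ≤ k) {t : ℝ}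
    (ht : 0 ≤ t) : s.esymm m ≤ (s.map (· + t)).esymm m := by
  rcases lt_or_ge (card s) m with hs | hs
  · rw [esymm_eq_zero_of_card_lt hs, esymm_eq_zero_of_card_lt (by rwa [card_map])]
  set P := (s.map (X + C ·)).prod
  set a := card s - m
  have hcoeff : ∀ j ≤ m, (hasseDeriv a P).coeff j = (j + a).choose a * s.esymm (m - j) := by
    intro j hj
    rw [hasseDeriv_coeff, prod_X_add_C_coeff s (by omega), show card s - (j + a) = m - j by omega]
  have hdeg : (hasseDeriv a P).natDegree < m + 1 := by
    rw [natDegree_hasseDeriv, natDegree_prod_X_add_C]; omega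
  have hshift : (s.map (· + t)).esymm m = (hasseDeriv a P).eval t := by
    rw [← taylor_coeff, taylor_prod_X_add_C, prod_X_add_C_coeff _ (by simp; omega), card_map,
      Nat.sub_sub_self hs]
  rw [hshift, eval_eq_sum_range' hdeg, Finset.sum_range_succ', hcoeff 0 m.zero_le]
  simp only [zero_add, Nat.choose_self, Nat.cast_one, one_mul, Nat.sub_zero, pow_zero, mul_one]
  refine le_add_of_nonneg_left (Finset.sum_nonneg fun j hj => ?_)
  rw [hcoeff (j + 1) (Finset.mem_range.1 hj)]
  exact mul_nonneg (mul_nonneg (Nat.cast_nonneg _) (h.esymm_pos (by omega)).le) (pow_nonneg ht _)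

theorem map_add (h : s.InGardingCone k) {t : ℝ} (ht : 0 ≤ t) :
    (s.map (· + t)).InGardingCone k :=
  fun m hm hmk => (h m hm hmk).trans_le (h.esymm_le_esymm_map_add hmk ht)

theorem map_segment (h : s.InGardingCone k) {c : ℝ} (hc₀ : 0 < c) (hc₁ : c ≤ 1) :
    (s.map fun x => c * x + (1 - c)).InGardingCone k := by
  have := (h.map_add (div_nonneg (sub_nonneg.2 hc₁) hc₀.le)).map_mul hc₀
  rw [map_map] at this
  convert this using 2 with x
  simp only [Function.comp_apply]
  field_simp

theorem esymm_ne_zero_of_cons {a : ℝ} (h : (a ::ₘ s).InGardingCone (k + 2))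
    (hk : 0 < s.esymm k) : s.esymm (k + 1) ≠ 0 := by
  intro h₀
  have hnewton := esymm_mul_esymm_nonpos_of_esymm_eq_zero h₀
  have hpos := h (k + 2) (by omega) le_rfl
  rw [esymm_cons_succ, h₀, mul_zero, zero_add] at hpos
  nlinarith

theorem of_cons {a : ℝ} (h : (a ::ₘ s).InGardingCone (k + 1)) : s.InGardingCone k := by
  induction k generalizing a s with
  | zero => exact fun m hm hm0 => absurd (hm.trans hm0) (by omega)
  | succ k ih =>
    refine inGardingCone_succ.2 ⟨ih (h.mono (by omega)), ?_⟩
    let f : ℝ → ℝ := fun c => (s.map fun x => c * x + (1 - c)).esymm (k + 1)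
    have hf : Continuous f := continuous_esymm_map (fun x => by fun_prop) s (k + 1)
    have hf₀ : 0 < f 0 := by
      have hcard : k + 1 ≤ card s := by simpa using h.le_card (by omega)
      simp only [f, zero_mul, zero_add, sub_zero, map_const', esymm_replicate, one_pow, mul_one]
      exact_mod_cast Nat.choose_pos hcard
    have hne : ∀ c ∈ Set.Icc (0 : ℝ) 1, f c ≠ 0 := by
      rintro c ⟨hc₀, hc₁⟩
      rcases hc₀.eq_or_lt with rfl | hc₀
      · exact hf₀.ne'
      have hc := h.map_segment hc₀ hc₁
      rw [map_cons] at hc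
      exact esymm_ne_zero_of_cons hc ((ih (hc.mono (by omega))).esymm_pos le_rfl)
    by_contra! hf₁
    obtain ⟨c, hc, hfc⟩ := intermediate_value_Icc' zero_le_one hf.continuousOn
      ⟨by simpa [f] using hf₁, hf₀.le⟩
    exact hne c hc hfc

end InGardingCone

end Multiset

namespace List

theorem prod_take_pos_of_inGardingCone {l : List ℝ} (hl : l.Pairwise (· ≥ ·)) {k : ℕ}
    (h : (l : Multiset ℝ).InGardingCone k) : 0 < (l.take k).prod := by
  induction l generalizing k with
  | nil => simp
  | cons a l ih =>
    rw [pairwise_cons] at hl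
    rw [← Multiset.cons_coe] at h
    cases k with
    | zero => simp
    | succ k =>
      rw [take_succ_cons, prod_cons]
      exact mul_pos (h.pos_of_forall_le hl.1) (ih hl.2 h.of_cons)

theorem esymm_le_choose_mul_prod_take {l : List ℝ} (hl : l.Pairwise (· ≥ ·)) {k : ℕ}
    (h : (l : Multiset ℝ).InGardingCone k) :
    (l : Multiset ℝ).esymm k ≤ l.length.choose k * (l.take k).prod := by
  induction l generalizing k with
  | nil =>
    cases k with
    | zero => simp [Multiset.esymm_zero]
    | succ k => simp [Multiset.esymm_eq_zero_of_card_lt (s := (0 : Multiset ℝ)) k.succ_pos]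
  | cons a l ih =>
    rw [pairwise_cons] at hl
    rw [← Multiset.cons_coe] at h
    cases k with
    | zero => simp [Multiset.esymm_zero]
    | succ j =>
      have ha : 0 < a := h.pos_of_forall_le hl.1
      have htail := h.of_cons
      have hP := prod_take_pos_of_inGardingCone hl.2 htail
      have hhead := ih hl.2 htail
      have htail_succ : (l : Multiset ℝ).esymm (j + 1)
          ≤ l.length.choose (j + 1) * (a * (l.take j).prod) := by
        rcases le_or_gt ((l : Multiset ℝ).esymm (j + 1)) 0 with hle | hgt
        · exact hle.trans (by positivity)
        have hcone := Multiset.inGardingCone_succ.2 ⟨htail, hgt⟩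
        have hlen : j < l.length := by simpa using hcone.le_card (by omega)
        calc (l : Multiset ℝ).esymm (j + 1)
            ≤ l.length.choose (j + 1) * ((l.take j).prod * l[j]) := by
              rw [← prod_take_succ _ _ hlen]; exact ih hl.2 hcone
          _ ≤ l.length.choose (j + 1) * (a * (l.take j).prod) := by
              rw [mul_comm a]; gcongr; exact hl.1 _ (getElem_mem hlen)
      rw [← Multiset.cons_coe, Multiset.esymm_cons_succ, length_cons, take_succ_cons, prod_cons,
        Nat.choose_succ_succ']
      push_cast
      nlinarith [mul_le_mul_of_nonneg_left hhead ha.le]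

end List

theorem esymm_upper_bound_general (n k : ℕ)
    (κ : Fin n → ℝ) (hκ : κ ∈ GardingCone n k) (hdec : Antitone κ) :
    esymm n k κ ≤ (n.choose k : ℝ) * ∏ i ∈ Finset.univ.filter (fun i : Fin n => (i : ℕ) < k), κ i := by
  have hesymm : ∀ m, esymm n m κ = (List.ofFn κ : Multiset ℝ).esymm m := fun m => by
    rw [← Fin.univ_val_map, Finset.esymm_map_val]; rfl
  have hsorted : (List.ofFn κ).Pairwise (· ≥ ·) :=
    List.pairwise_ofFn.2 fun i j hij => hdec hij.le
  have hcone : (List.ofFn κ : Multiset ℝ).InGardingCone k := fun m hm hmk =>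
    hesymm m ▸ hκ m hm hmk
  simpa [hesymm, List.prod_take_ofFn] using List.esymm_le_choose_mul_prod_take hsorted hcone

theorem esymm_upper_bound (n k : ℕ) (hk : 1 ≤ k) (hkn : k ≤ n)
    (κ : Fin n → ℝ) (hκ : κ ∈ GardingCone n k) (hdec : Antitone κ) :
    esymm n k κ ≤ (n.choose k : ℝ) * ∏ i ∈ Finset.univ.filter (fun i : Fin n => (i : ℕ) < k), κ i :=
  esymm_upper_bound_general n k κ hκ hdec
end

section
/- Let κ = (κ₁,…,κₙ) ∈ Γ_k with κ₁ ≥ κ₂ ≥ ⋯ ≥ κₙ. If κ_i ≤ 0 for some index i, then -κ_i < (n-k)κ₁/k. -/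
/-!
Removing a nonpositive entry `κ_j` keeps `σ_0, …, σ_k` positive, because
`σ_{m+1}(κ) = σ_{m+1}(κ without κ_j) + κ_j σ_m(κ without κ_j)`. Removing all nonpositive entries
except `κ_i` leaves the set `A` of positive entries together with `κ_i`, so
`-κ_i σ_{k-1}(A) < σ_k(A)`. Double counting pairs `j ∈ t` with `#t = k` gives
`k σ_k(A) ≤ (#A - k + 1) κ₁ σ_{k-1}(A)`, and `#A ≤ n - 1`.
-/

open Finset

variable {ι : Type*}

theorem Finset.sum_sum_erase_powersetCard_succ [DecidableEq ι] {M : Type*} [AddCommMonoid M]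
    (s : Finset ι) (m : ℕ) (f : Finset ι → M) :
    ∑ t ∈ s.powersetCard (m + 1), ∑ j ∈ t, f (t.erase j) =
      ∑ u ∈ s.powersetCard m, #(s \ u) • f u := by
  simp_rw [← sum_const]
  rw [sum_sigma', sum_sigma']
  refine sum_bij' (fun p _ => ⟨p.1.erase p.2, p.2⟩) (fun p _ => ⟨insert p.2 p.1, p.2⟩)
    ?_ ?_ (fun ⟨t, j⟩ h => ?_) (fun ⟨u, j⟩ h => ?_) (fun _ _ => rfl)
  all_goals simp only [mem_sigma, mem_powersetCard, mem_sdiff] at *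
  · grind
  · grind
  · rw [insert_erase h.2]
  · rw [erase_insert h.2.2]

def esymmOn {R : Type*} [CommSemiring R] (κ : ι → R) (m : ℕ) (s : Finset ι) : R :=
  ∑ t ∈ s.powersetCard m, ∏ j ∈ t, κ j

section CommSemiring

variable {R : Type*} [CommSemiring R] (κ : ι → R) (m : ℕ) {s : Finset ι} {i : ι}

@[simp]
theorem esymmOn_zero (s : Finset ι) : esymmOn κ 0 s = 1 := by
  simp [esymmOn]

theorem esymmOn_eq_zero_of_card_lt (h : #s < m) : esymmOn κ m s = 0 := by
  rw [esymmOn, powersetCard_eq_empty.2 h, sum_empty]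

theorem esymmOn_insert [DecidableEq ι] (hi : i ∉ s) :
    esymmOn κ (m + 1) (insert i s) = esymmOn κ (m + 1) s + κ i * esymmOn κ m s := by
  have hnot : ∀ t ∈ s.powersetCard m, i ∉ t := fun t ht => notMem_mono (mem_powersetCard.1 ht).1 hi
  have hdisj : Disjoint (s.powersetCard (m + 1)) ((s.powersetCard m).image (insert i)) :=
    disjoint_left.2 fun t ht ht' => by
      obtain ⟨u, -, rfl⟩ := mem_image.1 ht'
      exact hi ((mem_powersetCard.1 ht).1 (mem_insert_self i u))
  rw [esymmOn, powersetCard_succ_insert hi, sum_union hdisj,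
    sum_image (insert_erase_invOn.2.injOn.mono hnot), esymmOn, esymmOn, mul_sum]
  exact congrArg _ (sum_congr rfl fun t ht => prod_insert (hnot t ht))

theorem succ_mul_esymmOn_succ [DecidableEq ι] (s : Finset ι) :
    (m + 1) * esymmOn κ (m + 1) s =
      ∑ t ∈ s.powersetCard (m + 1), ∑ j ∈ t, κ j * ∏ l ∈ t.erase j, κ l := by
  rw [esymmOn, mul_sum]
  refine sum_congr rfl fun t ht => ?_
  rw [sum_congr rfl fun j hj => mul_prod_erase t κ hj, sum_const, (mem_powersetCard.1 ht).2,
    nsmul_eq_mul]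
  push_cast
  ring

end CommSemiring

section LinearOrderedRing

variable {R : Type*} [CommRing R] [LinearOrder R] [IsStrictOrderedRing R] {κ : ι → R} {k m : ℕ}
  {s t : Finset ι} {i : ι}

theorem esymmOn_nonneg (h : ∀ j ∈ s, 0 ≤ κ j) (m : ℕ) : 0 ≤ esymmOn κ m s :=
  sum_nonneg fun _ ht => prod_nonneg fun j hj => h j ((mem_powersetCard.1 ht).1 hj)

theorem esymmOn_pos (h : ∀ j ∈ s, 0 < κ j) (hm : m ≤ #s) : 0 < esymmOn κ m s :=
  sum_pos (fun _ ht => prod_pos fun j hj => h j ((mem_powersetCard.1 ht).1 hj))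
    (powersetCard_nonempty.2 hm)

theorem esymmOn_pos_of_insert [DecidableEq ι] (hi : i ∉ s) (hκi : κ i ≤ 0)
    (h : ∀ m ≤ k, 0 < esymmOn κ m (insert i s)) : ∀ m ≤ k, 0 < esymmOn κ m s := by
  intro m
  induction m with
  | zero => simp
  | succ m ih =>
    intro hm
    have hsucc := esymmOn_insert κ m hi ▸ h (m + 1) hm
    nlinarith [ih (by omega)]

theorem esymmOn_pos_of_subset [DecidableEq ι] (hts : t ⊆ s) (hneg : ∀ j ∈ s \ t, κ j ≤ 0)
    (h : ∀ m ≤ k, 0 < esymmOn κ m s) : ∀ m ≤ k, 0 < esymmOn κ m t := by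
  rw [← union_sdiff_of_subset hts] at h
  have hdisj : Disjoint t (s \ t) := disjoint_sdiff
  generalize s \ t = d at hneg h hdisj
  induction d using Finset.induction_on with
  | empty => simpa using h
  | insert j d hj ih =>
    rw [union_insert] at h
    refine ih (fun l hl => hneg l (mem_insert_of_mem hl)) ?_ (disjoint_of_subset_right
      (subset_insert j d) hdisj)
    refine esymmOn_pos_of_insert (fun hj' => ?_) (hneg j (mem_insert_self j d)) h
    rcases mem_union.1 hj' with hjt | hjd
    · exact disjoint_left.1 hdisj hjt (mem_insert_self j d)
    · exact hj hjd

theorem succ_mul_esymmOn_succ_le [DecidableEq ι] {c : R} (h0 : ∀ j ∈ s, 0 ≤ κ j)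
    (hc : ∀ j ∈ s, κ j ≤ c) (m : ℕ) :
    (m + 1) * esymmOn κ (m + 1) s ≤ (#s - m) * c * esymmOn κ m s := by
  rw [succ_mul_esymmOn_succ]
  calc _ ≤ ∑ t ∈ s.powersetCard (m + 1), ∑ j ∈ t, c * ∏ l ∈ t.erase j, κ l := by
        refine sum_le_sum fun t ht => sum_le_sum fun j hj => ?_
        have hts := (mem_powersetCard.1 ht).1
        exact mul_le_mul_of_nonneg_right (hc j (hts hj))
          (prod_nonneg fun l hl => h0 l (hts (mem_of_mem_erase hl)))
    _ = (#s - m) * c * esymmOn κ m s := by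
        rw [sum_sum_erase_powersetCard_succ s m fun u => c * ∏ l ∈ u, κ l, esymmOn, mul_sum]
        refine sum_congr rfl fun u hu => ?_
        obtain ⟨hus, rfl⟩ := mem_powersetCard.1 hu
        rw [card_sdiff_of_subset hus, nsmul_eq_mul, Nat.cast_sub (card_le_card hus)]
        ring

theorem neg_mul_lt_of_esymmOn_insert_pos [DecidableEq ι] {c : R} (hs : ∀ j ∈ s, 0 < κ j)
    (hc : ∀ j ∈ s, κ j ≤ c) (hi : i ∉ s) (hκi : κ i ≤ 0)
    (h : 0 < esymmOn κ (m + 1) (insert i s)) : -κ i * (m + 1) < (#s - m) * c := by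
  rw [esymmOn_insert κ m hi] at h
  have hσ : 0 < esymmOn κ (m + 1) s := by
    nlinarith [esymmOn_nonneg (fun j hj => (hs j hj).le) m (κ := κ)]
  have hcard : m + 1 ≤ #s := by
    by_contra hlt
    exact hσ.ne' (esymmOn_eq_zero_of_card_lt κ (m + 1) (by omega))
  have hσ' : 0 < esymmOn κ m s := esymmOn_pos hs (by omega)
  refine lt_of_mul_lt_mul_right ?_ hσ'.le
  calc -κ i * (m + 1) * esymmOn κ m s < (m + 1) * esymmOn κ (m + 1) s := by nlinarith
    _ ≤ (#s - m) * c * esymmOn κ m s :=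
        succ_mul_esymmOn_succ_le (fun j hj => (hs j hj).le) hc m

end LinearOrderedRing

theorem neg_entry_bound (n k : ℕ) (hk : 1 ≤ k) (hkn : k ≤ n)
    (κ : Fin n → ℝ) (hκ : κ ∈ GardingCone n k) (hdec : Antitone κ)
    (i : Fin n) (hi : κ i ≤ 0) :
    -κ i < ((n : ℝ) - k) * κ ⟨0, by omega⟩ / k := by
  classical
  set κ₁ := κ ⟨0, by omega⟩
  have hle : ∀ j, κ j ≤ κ₁ := fun j => hdec (Nat.zero_le j.val)
  have hκ₁ : 0 < κ₁ := by
    have hσ₁ : 0 < ∑ j, κ j := by simpa [esymm, powersetCard_one] using hκ 1 le_rfl hk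
    by_contra! h
    exact hσ₁.not_ge (sum_nonpos fun j _ => (hle j).trans h)
  set A := univ.filter (fun j => 0 < κ j)
  have hiA : i ∉ A := by simpa [A] using hi
  have hpos : ∀ m ≤ k, 0 < esymmOn κ m (insert i A) := by
    refine esymmOn_pos_of_subset (subset_univ _) (fun j hj => ?_) fun m hm => ?_
    · exact (by simpa [A] using hj : j ≠ i ∧ κ j ≤ 0).2
    · rcases m.eq_zero_or_pos with rfl | hm0
      · simp
      · exact hκ m hm0 hm
  obtain ⟨m, rfl⟩ : ∃ m, k = m + 1 := ⟨k - 1, by omega⟩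
  have hbound := neg_mul_lt_of_esymmOn_insert_pos (fun j hj => (mem_filter.1 hj).2)
    (fun j _ => hle j) hiA hi (hpos (m + 1) le_rfl)
  have hcard : #A < n := by simpa using card_lt_univ_of_notMem hiA
  have hcard' : (#A : ℝ) + 1 ≤ n := by exact_mod_cast hcard
  rw [lt_div_iff₀ (by positivity)]
  push_cast
  nlinarith
end
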